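/- Let n ≥ 1 be an integer and c ∈ Ω'_n a valid configuration. Suppose p ∈ ℤ^2 and d ≥ 1 are such that c(p) and c(p+(d,0)) are vertical stripe tiles (elements of B̂'_n ∪ Ĝ_n ∪ Ŷ_n ∪ Â_n) and c(p+(e,0)) is not a vertical stripe tile for every 0 < e < d. Then d ∈ {n−1, n, n+1}. -/
import Mathlib


structure WangTile (C : Type*) where
  right : C
  top : C
  left : C
  bottom : C
deriving DecidableEq

abbrev Lbl : Type := ℤ × ℤ × ℤ

def Vn (n : ℤ) : Set Lbl :=
  {v | 0 ≤ v.1 ∧ v.1 ≤ v.2.1 ∧ v.2.1 ≤ 1 ∧ v.2.1 ≤ v.2.2 ∧ v.2.2 ≤ n + 1}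

def hatT {C : Type*} (t : WangTile C) : WangTile C :=
  ⟨t.top, t.right, t.bottom, t.left⟩

def whiteTiles (n : ℤ) : Set (WangTile Lbl) :=
  {t | ∃ i j : ℤ, 1 ≤ i ∧ i ≤ n ∧ 1 ≤ j ∧ j ≤ n ∧
    t = ⟨(1, 1, i + 1), (1, 1, j + 1), (1, 1, i), (1, 1, j)⟩}

def blueH (n : ℤ) : Set (WangTile Lbl) :=
  {t | ∃ i : ℤ, 0 ≤ i ∧ i ≤ n ∧ t = ⟨(0, 0, i + 1), (1, 1, 1), (0, 0, i), (1, 1, n)⟩}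

def greenH (n : ℤ) : Set (WangTile Lbl) :=
  {t | ∃ i : ℤ, 0 ≤ i ∧ i ≤ n ∧ t = ⟨(0, 1, i + 1), (1, 1, 1), (0, 0, i), (1, 1, n + 1)⟩}

def yellowH (n : ℤ) : Set (WangTile Lbl) :=
  {t | ∃ i : ℤ, 1 ≤ i ∧ i ≤ n ∧ t = ⟨(0, 1, i + 1), (1, 1, 2), (0, 1, i), (1, 1, n + 1)⟩}

def antiH (n : ℤ) : Set (WangTile Lbl) :=
  {t | ∃ i : ℤ, 1 ≤ i ∧ i ≤ n ∧ t = ⟨(0, 0, i + 1), (1, 1, 2), (0, 1, i), (1, 1, n)⟩}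

def junctionTile (n k l r s : ℤ) : WangTile Lbl :=
  ⟨(0, k, l), (0, r, s), (0, s, r + n), (0, l, k + n)⟩

def jPairs : Set (ℤ × ℤ) := {(0, 0), (0, 1), (1, 1)}

def junctions (n : ℤ) : Set (WangTile Lbl) :=
  {t | ∃ k l r s : ℤ, (k, l) ∈ jPairs ∧ (r, s) ∈ jPairs ∧ t = junctionTile n k l r s}

def Text (n : ℤ) : Set (WangTile Lbl) :=
  whiteTiles n ∪ blueH n ∪ greenH n ∪ yellowH n ∪ antiH n ∪
    hatT '' blueH n ∪ hatT '' greenH n ∪ hatT '' yellowH n ∪ hatT '' antiH n ∪ junctions n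

def Dset (n : ℤ) : Set (WangTile Lbl) :=
  {(⟨(0, 0, n + 1), (1, 1, 1), (0, 0, n), (1, 1, n)⟩ : WangTile Lbl),
    hatT (⟨(0, 0, n + 1), (1, 1, 1), (0, 0, n), (1, 1, n)⟩ : WangTile Lbl),
    junctionTile n 0 0 1 1, junctionTile n 1 1 0 0}

def Tmet (n : ℤ) : Set (WangTile Lbl) :=
  Text n \ (antiH n ∪ hatT '' antiH n ∪ Dset n)

def ValidConfig {C : Type*} (T : Set (WangTile C)) (x : ℤ × ℤ → WangTile C) : Prop :=
  (∀ m, x m ∈ T) ∧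
    (∀ m : ℤ × ℤ, (x m).right = (x (m.1 + 1, m.2)).left) ∧
    (∀ m : ℤ × ℤ, (x m).top = (x (m.1, m.2 + 1)).bottom)

def ValidPattern {C : Type*} (T : Set (WangTile C)) (w h : ℕ) (p : ℕ → ℕ → WangTile C) : Prop :=
  (∀ i j, i < w → j < h → p i j ∈ T) ∧
    (∀ i j, i + 1 < w → j < h → (p i j).right = (p (i + 1) j).left) ∧
    (∀ i j, i < w → j + 1 < h → (p i j).top = (p i (j + 1)).bottom)

def bottomWord {C : Type*} (w : ℕ) (p : ℕ → ℕ → WangTile C) : List C :=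
  (List.range w).map fun i => (p i 0).bottom

def topWord {C : Type*} (w h : ℕ) (p : ℕ → ℕ → WangTile C) : List C :=
  (List.range w).map fun i => (p i (h - 1)).top

def leftWord {C : Type*} (h : ℕ) (p : ℕ → ℕ → WangTile C) : List C :=
  (List.range h).map fun j => (p 0 j).left

def rightWord {C : Type*} (w h : ℕ) (p : ℕ → ℕ → WangTile C) : List C :=
  (List.range h).map fun j => (p (w - 1) j).right

def tau (n : ℤ) (v : Lbl) : List Lbl :=
  if v.1 = v.2.2 then
    (0, v.1 - v.2.1 + 1, n + 1) :: List.replicate (n - v.2.2).toNat (1, 1, n + 1)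
  else
    (0, v.1 - v.2.1 + 1, n) ::
      (List.replicate (v.2.2 - v.1 - 1).toNat (1, 1, n) ++
        List.replicate (n + 1 - v.2.2).toNat (1, 1, n + 1))

def vStripes (n : ℤ) : Set (WangTile Lbl) :=
  hatT '' (blueH n ∪ greenH n ∪ yellowH n ∪ antiH n)

lemma vStripes_right (n : ℤ) (t : WangTile Lbl) (ht : t ∈ vStripes n) :
    t.right = (1, 1, 1) ∨ t.right = (1, 1, 2) := by
  obtain ⟨s, hs, rfl⟩ := ht
  rcases hs with ((h | h) | h) | h <;>
    obtain ⟨i, _, _, rfl⟩ := h <;> simp [hatT]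

lemma vStripes_left (n : ℤ) (t : WangTile Lbl) (ht : t ∈ vStripes n) :
    t.left = (1, 1, n) ∨ t.left = (1, 1, n + 1) := by
  obtain ⟨s, hs, rfl⟩ := ht
  rcases hs with ((h | h) | h) | h <;>
    obtain ⟨i, _, _, rfl⟩ := h <;> simp [hatT]

lemma white_step (n : ℤ) (t : WangTile Lbl) (ht : t ∈ Text n) (hns : t ∉ vStripes n)
    (m : ℤ) (hl : t.left = (1, 1, m)) : 1 ≤ m ∧ m ≤ n ∧ t.right = (1, 1, m + 1) := by
  rcases ht with ((((((((hw | hb) | hg) | hy) | ha) | hhb) | hhg) | hhy) | hha) | hj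
  · obtain ⟨i, j, hi1, hi2, _, _, rfl⟩ := hw
    have him : i = m := by simpa [Prod.ext_iff] using hl
    subst him
    exact ⟨hi1, hi2, rfl⟩
  · obtain ⟨i, _, _, rfl⟩ := hb; simp [Prod.ext_iff] at hl
  · obtain ⟨i, _, _, rfl⟩ := hg; simp [Prod.ext_iff] at hl
  · obtain ⟨i, _, _, rfl⟩ := hy; simp [Prod.ext_iff] at hl
  · obtain ⟨i, _, _, rfl⟩ := ha; simp [Prod.ext_iff] at hl
  · obtain ⟨s, hs, rfl⟩ := hhb
    exact absurd ⟨s, Or.inl (Or.inl (Or.inl hs)), rfl⟩ hns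
  · obtain ⟨s, hs, rfl⟩ := hhg
    exact absurd ⟨s, Or.inl (Or.inl (Or.inr hs)), rfl⟩ hns
  · obtain ⟨s, hs, rfl⟩ := hhy
    exact absurd ⟨s, Or.inl (Or.inr hs), rfl⟩ hns
  · obtain ⟨s, hs, rfl⟩ := hha
    exact absurd ⟨s, Or.inr hs, rfl⟩ hns
  · obtain ⟨k, l, r, s, _, _, rfl⟩ := hj
    simp [junctionTile, Prod.ext_iff] at hl

lemma chain (n : ℤ) (c : ℤ × ℤ → WangTile Lbl) (hc : ValidConfig (Text n) c)
    (p : ℤ × ℤ) (d : ℤ)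
    (h2 : ∀ e : ℤ, 0 < e → e < d → c (p.1 + e, p.2) ∉ vStripes n)
    (k : ℤ) (hk : (c p).right = (1, 1, k)) :
    ∀ e : ℕ, 1 ≤ (e : ℤ) → (e : ℤ) ≤ d →
      (c (p.1 + e, p.2)).left = (1, 1, k + e - 1) := by
  intro e
  induction e with
  | zero => intro h; norm_num at h
  | succ m ih =>
    intro _ hle
    rcases Nat.eq_zero_or_pos m with rfl | hm
    · have := hc.2.1 p
      rw [hk] at this
      push_cast
      rw [← this]; norm_num
    · have hm1 : (1 : ℤ) ≤ m := by exact_mod_cast hm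
      have hmd : (m : ℤ) ≤ d := by push_cast at hle; omega
      have hleft := ih hm1 hmd
      have hmd' : (m : ℤ) < d := by push_cast at hle; omega
      have hns := h2 m (by omega) hmd'
      have hmem := hc.1 (p.1 + m, p.2)
      obtain ⟨_, _, hr⟩ := white_step n _ hmem hns _ hleft
      have hadj := hc.2.1 (p.1 + m, p.2)
      rw [hr] at hadj
      have hpt : ((p.1 + (m : ℤ)) + 1, p.2) = (p.1 + ((m : ℤ) + 1), p.2) := by
        simp; ring
      rw [hpt] at hadj
      push_cast
      rw [← hadj]
      ring_nf

/-- the distance between consecutive vertical stripe tiles in a row of a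
configuration of `Ω'_n` is `n-1`, `n` or `n+1`. -/
theorem stmt9 (n : ℤ) (hn : 1 ≤ n) (c : ℤ × ℤ → WangTile Lbl)
    (hc : ValidConfig (Text n) c) (p : ℤ × ℤ) (d : ℤ) (hd : 1 ≤ d)
    (h0 : c p ∈ vStripes n) (h1 : c (p.1 + d, p.2) ∈ vStripes n)
    (h2 : ∀ e : ℤ, 0 < e → e < d → c (p.1 + e, p.2) ∉ vStripes n) :
    d = n - 1 ∨ d = n ∨ d = n + 1 := by
  have hdt : ((d.toNat : ℤ)) = d := Int.toNat_of_nonneg (by omega)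
  have hL := vStripes_left n _ h1
  rcases vStripes_right n _ h0 with hk | hk
  · have := chain n c hc p d h2 1 hk d.toNat (by omega) (by omega)
    rw [hdt] at this
    rw [this] at hL
    rcases hL with h | h <;> simp [Prod.ext_iff] at h <;> omega
  · have := chain n c hc p d h2 2 hk d.toNat (by omega) (by omega)
    rw [hdt] at this
    rw [this] at hL
    rcases hL with h | h <;> simp [Prod.ext_iff] at h <;> omega
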